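/- Fix μ ∈ ℝ with μ ≠ −1/2, β ≥ 0 and t ≥ 0. Define the Verhulst process θ_s^{(μ,β)} = e^{B_s+μs}/(1 + β∫_0^u e^{B_u+μu} du). Then E[ exp( β∫_0^t θ_s^{(μ,β)} ds ) ] = 1 + (β/(μ + 1/2)) ( e^{(μ+1/2)t} − 1 ). (Second identity of Proposition 2.6.) -/

import Mathlib

open MeasureTheory ProbabilityTheory Real

/-- A standard one-dimensional Brownian motion on `(Ω, F, P)`: starts at `0`,
has continuous paths, Gaussian increments `B_t − B_s ~ N(0, t−s)` for
`0 ≤ s ≤ t`, and independent increments. -/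
structure IsBrownianMotion {Ω : Type*} [MeasurableSpace Ω] (P : Measure Ω)
    (B : ℝ → Ω → ℝ) : Prop where
  meas : ∀ t : ℝ, Measurable (B t)
  init : ∀ ω, B 0 ω = 0
  cont : ∀ ω, Continuous fun t => B t ω
  gauss : ∀ s t : ℝ, 0 ≤ s → s ≤ t →
    Measure.map (fun ω => B t ω - B s ω) P = gaussianReal 0 (Real.toNNReal (t - s))
  indep : ∀ (n : ℕ) (τ : Fin (n + 1) → ℝ), Monotone τ → (∀ i, 0 ≤ τ i) →
    iIndepFun
      (fun i : Fin n => fun ω => B (τ i.succ) ω - B (τ i.castSucc) ω) P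

variable {Ω : Type*}

/-- The Verhulst process driven by the process `B`, with drift `μ` and crowding
parameter `β`: `θ_t = e^{B_t+μt} / (1 + β ∫_0^t e^{B_s+μs} ds)`. -/
noncomputable def verhulst (B : ℝ → Ω → ℝ) (μ β : ℝ) (t : ℝ) (ω : Ω) : ℝ :=
  Real.exp (B t ω + μ * t)
    / (1 + β * ∫ s in (0:ℝ)..t, Real.exp (B s ω + μ * s))


open scoped NNReal

/-!
Along a fixed path, `g s = e^{B_s + μ s}` is continuous and positive, and
`β θ_s = β g s / (1 + β ∫_0^s g)` is the derivative of `log (1 + β ∫_0^s g)`; hence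
`exp (β ∫_0^t θ) = 1 + β ∫_0^t e^{B_s + μ s} ds` pathwise. Taking expectations and swapping the
integrals (the integrand is nonnegative), the Gaussian moment `E e^{B_s} = e^{s/2}` leaves
`1 + β ∫_0^t e^{(μ + 1/2) s} ds`.
-/

theorem integral_exp_mul {c : ℝ} (hc : c ≠ 0) (a b : ℝ) :
    ∫ x in a..b, exp (c * x) = (exp (c * b) - exp (c * a)) / c := by
  rw [intervalIntegral.integral_comp_mul_left (fun x => exp x) hc, integral_exp, smul_eq_mul,
    inv_mul_eq_div]

theorem exp_mul_integral_div_one_add_mul_integral {g : ℝ → ℝ} (hg : Continuous g) {β a b : ℝ}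
    (hpos : ∀ u ∈ Set.uIcc a b, 0 < 1 + β * ∫ s in a..u, g s) :
    exp (β * ∫ s in a..b, g s / (1 + β * ∫ u in a..s, g u)) = 1 + β * ∫ s in a..b, g s := by
  set G : ℝ → ℝ := fun u => 1 + β * ∫ s in a..u, g s
  have hG : ∀ u, HasDerivAt G (β * g u) u := fun u =>
    ((hg.integral_hasStrictDerivAt a u).hasDerivAt.const_mul β).const_add 1
  have hlogG : ∀ u ∈ Set.uIcc a b, HasDerivAt (fun u => log (G u)) (β * (g u / G u)) u := by
    intro u hu
    convert (hG u).log (hpos u hu).ne' using 1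
    ring
  have hcont : ContinuousOn (fun u => β * (g u / G u)) (Set.uIcc a b) :=
    continuousOn_const.mul (hg.continuousOn.div
      (continuous_const.add (continuous_const.mul
        (intervalIntegral.continuous_primitive hg.intervalIntegrable a))).continuousOn
      fun u hu => (hpos u hu).ne')
  have hGa : G a = 1 := by simp [G]
  rw [← intervalIntegral.integral_const_mul,
    intervalIntegral.integral_eq_sub_of_hasDerivAt hlogG hcont.intervalIntegrable, hGa, log_one,
    sub_zero, exp_log (hpos b Set.right_mem_uIcc)]

section Gaussian

variable [MeasurableSpace Ω] {P : Measure Ω} {X : Ω → ℝ} {m : ℝ} {v : ℝ≥0}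

theorem integral_exp_of_map_eq_gaussianReal (hX : P.map X = gaussianReal m v) :
    ∫ ω, exp (X ω) ∂P = exp (m + v / 2) := by
  simpa [mgf] using mgf_gaussianReal hX 1

theorem integrable_exp_of_map_eq_gaussianReal (hX : P.map X = gaussianReal m v) :
    Integrable (fun ω => exp (X ω)) P := by
  have : NeZero P := ⟨by
    rintro rfl
    exact IsProbabilityMeasure.ne_zero _ (by simpa only [Measure.map_zero] using hX.symm)⟩
  simpa using mgf_pos_iff.mp ((mgf_gaussianReal hX 1).symm ▸ exp_pos _ : 0 < mgf X P 1)

end Gaussian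

theorem integrable_uncurry_of_nonneg {α : Type*} [MeasurableSpace α] [MeasurableSpace Ω]
    {ν : Measure α} {P : Measure Ω} [SFinite ν] [SFinite P] {f : α → Ω → ℝ}
    (hf : AEStronglyMeasurable (Function.uncurry f) (ν.prod P)) (hf0 : ∀ s ω, 0 ≤ f s ω)
    (hfs : ∀ᵐ s ∂ν, Integrable (f s) P) (hfi : Integrable (fun s => ∫ ω, f s ω ∂P) ν) :
    Integrable (Function.uncurry f) (ν.prod P) := by
  refine (integrable_prod_iff hf).mpr ⟨hfs, hfi.congr (ae_of_all _ fun s => ?_)⟩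
  simp only [Function.uncurry_apply_pair, Real.norm_of_nonneg (hf0 s _)]

theorem MeasureTheory.Integrable.intervalIntegral_prod_right {E : Type*} [MeasurableSpace Ω]
    {P : Measure Ω} [SFinite P] [NormedAddCommGroup E] [NormedSpace ℝ E] {a b : ℝ}
    {f : ℝ → Ω → E}
    (hf : Integrable (Function.uncurry f) ((volume.restrict (Set.uIoc a b)).prod P)) :
    Integrable (fun ω => ∫ s in a..b, f s ω) P := by
  simp_rw [intervalIntegral.intervalIntegral_eq_integral_uIoc]
  exact Integrable.smul _ hf.integral_prod_right

theorem exp_mul_integral_verhulst {B : ℝ → Ω → ℝ} {ω : Ω} (hBω : Continuous fun s => B s ω)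
    (μ : ℝ) {β t : ℝ} (hβ : 0 ≤ β) (ht : 0 ≤ t) :
    exp (β * ∫ s in (0:ℝ)..t, verhulst B μ β s ω)
      = 1 + β * ∫ s in (0:ℝ)..t, exp (B s ω + μ * s) := by
  refine exp_mul_integral_div_one_add_mul_integral (by fun_prop) fun u hu => ?_
  rw [Set.uIcc_of_le ht] at hu
  have : 0 ≤ ∫ s in (0:ℝ)..u, exp (B s ω + μ * s) :=
    intervalIntegral.integral_nonneg hu.1 fun s _ => (exp_pos _).le
  positivity

namespace IsBrownianMotion

variable [MeasurableSpace Ω] {P : Measure Ω} {B : ℝ → Ω → ℝ}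

theorem map_eq_gaussianReal (hB : IsBrownianMotion P B) {s : ℝ} (hs : 0 ≤ s) :
    P.map (B s) = gaussianReal 0 s.toNNReal := by
  simpa [hB.init] using hB.gauss 0 s le_rfl hs

theorem integrable_exp_add_mul (hB : IsBrownianMotion P B) (μ : ℝ) {s : ℝ} (hs : 0 ≤ s) :
    Integrable (fun ω => exp (B s ω + μ * s)) P := by
  simp_rw [exp_add, mul_comm _ (exp (μ * s))]
  exact (integrable_exp_of_map_eq_gaussianReal (hB.map_eq_gaussianReal hs)).const_mul _

theorem integral_exp_add_mul (hB : IsBrownianMotion P B) (μ : ℝ) {s : ℝ} (hs : 0 ≤ s) :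
    ∫ ω, exp (B s ω + μ * s) ∂P = exp ((μ + 1/2) * s) := by
  simp_rw [exp_add, mul_comm _ (exp (μ * s))]
  rw [integral_const_mul, integral_exp_of_map_eq_gaussianReal (hB.map_eq_gaussianReal hs),
    Real.coe_toNNReal _ hs, ← exp_add]
  ring_nf

theorem integrable_uncurry_exp_add_mul [IsFiniteMeasure P] (hB : IsBrownianMotion P B) (μ : ℝ)
    {t : ℝ} (ht : 0 ≤ t) :
    Integrable (Function.uncurry fun s ω => exp (B s ω + μ * s))
      ((volume.restrict (Set.uIoc 0 t)).prod P) := by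
  have hmeas : StronglyMeasurable (Function.uncurry fun s ω => exp (B s ω + μ * s)) :=
    stronglyMeasurable_uncurry_of_continuous_of_stronglyMeasurable
      (fun ω => by have := hB.cont ω; fun_prop)
      (fun s => ((hB.meas s).add_const _).exp.stronglyMeasurable)
  have hs : ∀ᵐ s ∂volume.restrict (Set.uIoc 0 t), 0 ≤ s := by
    filter_upwards [ae_restrict_mem measurableSet_uIoc] with s hs
    exact (Set.uIoc_of_le ht ▸ hs).1.le
  refine integrable_uncurry_of_nonneg hmeas.aestronglyMeasurable (fun _ _ => (exp_pos _).le)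
    (hs.mono fun s hs => hB.integrable_exp_add_mul μ hs) ?_
  refine (Continuous.integrableOn_uIoc
    (by fun_prop : Continuous fun s => exp ((μ + 1/2) * s))).congr (hs.mono fun s hs => ?_)
  exact (hB.integral_exp_add_mul μ hs).symm

end IsBrownianMotion

/-- Second identity of Proposition 2.6: for `μ ≠ −1/2`,
`E[exp(β ∫_0^t θ_s^{(μ,β)} ds)] = 1 + (β/(μ+1/2)) (e^{(μ+1/2)t} − 1)`. -/
theorem expectation_exp_integral_verhulst {Ω : Type*} [m0 : MeasurableSpace Ω]
    (P : Measure Ω) [IsProbabilityMeasure P]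
    (B : ℝ → Ω → ℝ) (hB : IsBrownianMotion P B)
    (μ β t : ℝ) (hμ : μ ≠ -(1/2)) (hβ : 0 ≤ β) (ht : 0 ≤ t) :
    ∫ ω, Real.exp (β * ∫ s in (0:ℝ)..t, verhulst B μ β s ω) ∂P
      = 1 + β / (μ + 1/2) * (Real.exp ((μ + 1/2) * t) - 1) := by
  have hc : μ + 1/2 ≠ 0 := fun h => hμ (by linarith)
  have hint := hB.integrable_uncurry_exp_add_mul μ ht
  calc ∫ ω, exp (β * ∫ s in (0:ℝ)..t, verhulst B μ β s ω) ∂P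
      = ∫ ω, (1 + β * ∫ s in (0:ℝ)..t, exp (B s ω + μ * s)) ∂P := by
        simp_rw [exp_mul_integral_verhulst (hB.cont _) μ hβ ht]
    _ = 1 + β * ∫ s in (0:ℝ)..t, ∫ ω, exp (B s ω + μ * s) ∂P := by
        rw [integral_add (integrable_const 1) (hint.intervalIntegral_prod_right.const_mul β),
          integral_const_mul, intervalIntegral_integral_swap hint]
        simp
    _ = 1 + β * ∫ s in (0:ℝ)..t, exp ((μ + 1/2) * s) := by
        rw [intervalIntegral.integral_congr fun s hs => hB.integral_exp_add_mul μ
          (Set.uIcc_of_le ht ▸ hs).1]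
    _ = 1 + β / (μ + 1/2) * (exp ((μ + 1/2) * t) - 1) := by
        rw [integral_exp_mul hc, mul_zero, exp_zero]
        ring
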